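/- arXiv:1906.09003 — 7 statements merged into one kernel-verified Lean document; each statement's English description precedes it below -/
import Mathlib

section
/- (Lemma 1, densification.) Let ‖·‖ be a norm on ℝⁿ, let 0 < α ≤ β, let 2 ≤ b, and let M ⊂ ℝⁿ be a finite set with |M| = m and b ≤ m, such that every subset S ⊆ M with |S| = b is α-β-connected. Set d = m − b. Then for every z ∈ M there exists a subset M_z ⊆ M \ {z} with |M_z| = d + 1 = m − b + 1 such that every z' ∈ M_z satisfies α ≤ ‖z − z'‖ ≤ β, i.e., M_z is contained in the closed annulus B(z, α, β) = {y ∈ ℝⁿ : α ≤ ‖y − z‖ ≤ β}. -/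
/-- `S` is α-β-connected (w.r.t. the norm `N` on `ℝⁿ`):
(i) `α` is the minimum of the pairwise distances of `S`, and
(ii) `β` is the minimum of all `r ≥ 0` such that the graph on `S` joining two
distinct points exactly when their distance is `≤ r` is connected. -/
def ABConnected (n : ℕ) (N : (Fin n → ℝ) → ℝ) (α β : ℝ)
    (S : Finset (Fin n → ℝ)) : Prop :=
  IsLeast {d : ℝ | ∃ x ∈ S, ∃ y ∈ S, x ≠ y ∧ N (x - y) = d} α ∧
  IsLeast {r : ℝ | 0 ≤ r ∧
    (SimpleGraph.fromRel (fun a b : {x // x ∈ S} => N (a.1 - b.1) ≤ r)).Connected} β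

/-!
The β-graph of a b-subset containing `z` is connected, so `z` has a neighbour in it, i.e. a point
of the annulus `B(z, α, β)` (the lower bound `α` holds for every pair). Hence every
`(b - 1)`-subset of `M \ {z}` meets the annulus, which forces the annulus to contain all but
at most `b - 2` of the `m - 1` points of `M \ {z}`.
-/

theorem Finset.card_lt_card_filter_add_of_forall_exists {α : Type*} {s : Finset α} {k : ℕ}
    {p : α → Prop} [DecidablePred p] (h : ∀ t ⊆ s, t.card = k → ∃ x ∈ t, p x) :
    s.card < (s.filter p).card + k := by
  by_contra! hle
  obtain ⟨t, hts, htk⟩ : ∃ t ⊆ s.filter (¬ p ·), t.card = k := by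
    refine Finset.exists_subset_card_eq ?_
    have := Finset.card_filter_add_card_filter_not (s := s) p
    omega
  obtain ⟨x, hxt, hx⟩ := h t (hts.trans (Finset.filter_subset _ _)) htk
  exact (Finset.mem_filter.1 (hts hxt)).2 hx

theorem ABConnected.exists_ne_mem_annulus {n : ℕ} {N : (Fin n → ℝ) → ℝ} {α β : ℝ}
    {S : Finset (Fin n → ℝ)} (hS : ABConnected n N α β S) (hN_neg : ∀ x, N (-x) = N x)
    (hcard : 1 < S.card) {z : Fin n → ℝ} (hz : z ∈ S) :
    ∃ z' ∈ S, z' ≠ z ∧ α ≤ N (z' - z) ∧ N (z' - z) ≤ β := by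
  obtain ⟨hα, ⟨-, hβ⟩, -⟩ := hS
  have : Nontrivial {x // x ∈ S} := (Finset.one_lt_card_iff_nontrivial.1 hcard).coe_sort
  obtain ⟨⟨v, hv⟩, hne, hle⟩ := hβ.preconnected.exists_adj_of_nontrivial ⟨z, hz⟩
  have hvz : v ≠ z := fun h => hne (Subtype.ext h.symm)
  refine ⟨v, hv, hvz, hα.2 ⟨v, hv, z, hz, hvz, rfl⟩, ?_⟩
  rcases hle with hle | hle
  · simpa only [← neg_sub v z, hN_neg] using hle
  · exact hle

theorem densification_general
    (n : ℕ) (N : (Fin n → ℝ) → ℝ)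
    (hN_smul : ∀ (a : ℝ) (x : Fin n → ℝ), N (a • x) = |a| * N x)
    (b m : ℕ) (hb : 2 ≤ b)
    (M : Finset (Fin n → ℝ)) (hM : M.card = m) (hbm : b ≤ m)
    (α β : ℝ)
    (hconn : ∀ S ⊆ M, S.card = b → ABConnected n N α β S) :
    ∀ z ∈ M, ∃ Mz : Finset (Fin n → ℝ), Mz ⊆ M.erase z ∧
      Mz.card = m - b + 1 ∧
      ∀ z' ∈ Mz, α ≤ N (z' - z) ∧ N (z' - z) ≤ β := by
  have hN_neg (x : Fin n → ℝ) : N (-x) = N x := by simpa using hN_smul (-1) x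
  intro z hz
  set A := (M.erase z).filter fun z' => α ≤ N (z' - z) ∧ N (z' - z) ≤ β
  have hA : (M.erase z).card < A.card + (b - 1) := by
    refine Finset.card_lt_card_filter_add_of_forall_exists fun t ht htcard => ?_
    have hzt : z ∉ t := fun h => (Finset.mem_erase.1 (ht h)).1 rfl
    have hcard : (insert z t).card = b := by rw [Finset.card_insert_of_notMem hzt]; omega
    have hsub : insert z t ⊆ M := Finset.insert_subset hz (ht.trans (Finset.erase_subset _ _))
    obtain ⟨z', hz', hz'z, hann⟩ := (hconn _ hsub hcard).exists_ne_mem_annulus hN_neg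
      (by omega) (Finset.mem_insert_self z t)
    exact ⟨z', (Finset.mem_insert.1 hz').resolve_left hz'z, hann⟩
  rw [Finset.card_erase_of_mem hz, hM] at hA
  obtain ⟨Mz, hMzA, hMzcard⟩ :=
    Finset.exists_subset_card_eq (show m - b + 1 ≤ A.card by omega)
  exact ⟨Mz, hMzA.trans (Finset.filter_subset _ _), hMzcard,
    fun z' hz' => (Finset.mem_filter.1 (hMzA hz')).2⟩

/-- Lemma 1, densification: if every `b`-sized subset of `M`
(`|M| = m ≥ b ≥ 2`) is α-β-connected (`0 < α ≤ β`), then for every `z ∈ M` there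
are `m - b + 1` points of `M \ {z}` inside the closed annulus
`B(z, α, β) = {y : α ≤ ‖y − z‖ ≤ β}`. -/
theorem densification
    (n : ℕ) (N : (Fin n → ℝ) → ℝ)
    (hN_eq : ∀ x, N x = 0 ↔ x = 0)
    (hN_add : ∀ x y, N (x + y) ≤ N x + N y)
    (hN_smul : ∀ (a : ℝ) (x : Fin n → ℝ), N (a • x) = |a| * N x)
    (b m : ℕ) (hb : 2 ≤ b)
    (M : Finset (Fin n → ℝ)) (hM : M.card = m) (hbm : b ≤ m)
    (α β : ℝ) (hα : 0 < α) (hαβ : α ≤ β)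
    (hconn : ∀ S ⊆ M, S.card = b → ABConnected n N α β S) :
    ∀ z ∈ M, ∃ Mz : Finset (Fin n → ℝ), Mz ⊆ M.erase z ∧
      Mz.card = m - b + 1 ∧
      ∀ z' ∈ Mz, α ≤ N (z' - z) ∧ N (z' - z) ≤ β :=
  densification_general n N hN_smul b m hb M hM hbm α β hconn
end

section
/- (Corollary 1.) Let ‖·‖ be a norm on ℝⁿ, let 0 < α ≤ β, let 2 ≤ b, and let M ⊂ ℝⁿ be a finite set with |M| = m and b ≤ m, such that every subset S ⊆ M with |S| = b is α-β-connected. Then M is (m − b + 1)-β-dense; that is, for every z ∈ M there exists M' ⊆ M \ {z} with |M'| = m − b + 1 such that every z' ∈ M' satisfies ‖z − z'‖ ≤ β. -/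
/-- Corollary 1: if every `b`-sized subset of `M` (`|M| = m ≥ b ≥ 2`)
is α-β-connected (`0 < α ≤ β`), then `M` is `(m − b + 1)`-`β`-dense: for every
`z ∈ M` there exists `M' ⊆ M \ {z}` with `|M'| = m − b + 1` all of whose points
are within distance `β` of `z`. -/
theorem density_corollary
    (n : ℕ) (N : (Fin n → ℝ) → ℝ)
    (hN_eq : ∀ x, N x = 0 ↔ x = 0)
    (hN_add : ∀ x y, N (x + y) ≤ N x + N y)
    (hN_smul : ∀ (a : ℝ) (x : Fin n → ℝ), N (a • x) = |a| * N x)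
    (b m : ℕ) (hb : 2 ≤ b)
    (M : Finset (Fin n → ℝ)) (hM : M.card = m) (hbm : b ≤ m)
    (α β : ℝ) (hα : 0 < α) (hαβ : α ≤ β)
    (hconn : ∀ S ⊆ M, S.card = b → ABConnected n N α β S) :
    ∀ z ∈ M, ∃ M' : Finset (Fin n → ℝ), M' ⊆ M.erase z ∧
      M'.card = m - b + 1 ∧
      ∀ z' ∈ M', N (z - z') ≤ β := by
  intro z hz
  have hsym : ∀ x y : Fin n → ℝ, N (x - y) = N (y - x) := by
    intro x y
    rw [← neg_sub, ← neg_one_smul ℝ, hN_smul]; simp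
  classical
  set F := (M.erase z).filter (fun z' => N (z - z') ≤ β) with hF
  by_cases hcard : m - b + 1 ≤ F.card
  · obtain ⟨M', hM'F, hM'card⟩ := Finset.exists_subset_card_eq hcard
    refine ⟨M', hM'F.trans (Finset.filter_subset _ _), hM'card, ?_⟩
    intro z' hz'
    exact (Finset.mem_filter.mp (hM'F hz')).2
  · exfalso
    push_neg at hcard
    set G := (M.erase z).filter (fun z' => ¬ N (z - z') ≤ β) with hG
    have hsplit : F.card + G.card = (M.erase z).card :=
      Finset.card_filter_add_card_filter_not (fun z' => N (z - z') ≤ β)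
    have hec : (M.erase z).card = m - 1 := by
      rw [Finset.card_erase_of_mem hz, hM]
    have hGcard : b - 1 ≤ G.card := by omega
    obtain ⟨G', hG'G, hG'card⟩ := Finset.exists_subset_card_eq hGcard
    set S := insert z G' with hS
    have hzG' : z ∉ G' := fun h =>
      (Finset.mem_erase.mp (Finset.filter_subset _ _ (hG'G h))).1 rfl
    have hScard : S.card = b := by
      rw [hS, Finset.card_insert_of_notMem hzG', hG'card]; omega
    have hSM : S ⊆ M := by
      intro x hx
      rcases Finset.mem_insert.mp hx with h | h
      · exact h ▸ hz
      · exact Finset.erase_subset _ _ (Finset.filter_subset _ _ (hG'G h))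
    obtain ⟨-, ⟨⟨hβ0, hconn'⟩, -⟩⟩ := hconn S hSM hScard
    have hzS : z ∈ S := Finset.mem_insert_self _ _
    obtain ⟨w, hwG'⟩ : G'.Nonempty := Finset.card_pos.mp (by omega)
    have hwS : w ∈ S := Finset.mem_insert_of_mem hwG'
    have hwz : w ≠ z := fun h => hzG' (h ▸ hwG')
    obtain ⟨p⟩ := hconn'.preconnected ⟨z, hzS⟩ ⟨w, hwS⟩
    cases p with
    | nil => exact hwz rfl
    | @cons _ v _ h p =>
      rw [SimpleGraph.fromRel_adj] at h
      obtain ⟨hne, hle⟩ := h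
      have hvS : v.1 ∈ S := v.2
      have hvz : v.1 ≠ z := by
        intro hvzeq
        exact hne (Subtype.ext hvzeq.symm)
      have hvG' : v.1 ∈ G' := by
        rcases Finset.mem_insert.mp hvS with h' | h'
        · exact absurd h' hvz
        · exact h'
      have hfar : ¬ N (z - v.1) ≤ β := (Finset.mem_filter.mp (hG'G hvG')).2
      rcases hle with h' | h'
      · exact hfar h'
      · exact hfar (by rwa [hsym])
end

section
/- (Corollary 2.) Let ‖·‖ be a norm on ℝⁿ, let 0 < α ≤ β, let 2 ≤ b, let ε > 0, and let M ⊂ ℝⁿ be a finite set with |M| = m and b ≤ m, such that every subset S ⊆ M with |S| = b is α-β-connected. If m − b + 1 > N_ε(B(0, α, β)), then M is not ε-separated; i.e., there exist z, z' ∈ M with z ≠ z' and ‖z − z'‖ < ε. -/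
/-- The ε-metric entropy of `X ⊆ ℝⁿ` (w.r.t. the norm `N`): the supremum of the
cardinalities of finite ε-separated subsets of `X`. -/
noncomputable def metricEntropy (n : ℕ) (N : (Fin n → ℝ) → ℝ) (ε : ℝ)
    (X : Set (Fin n → ℝ)) : ℕ∞ :=
  ⨆ (S : Finset (Fin n → ℝ)) (_ : ↑S ⊆ X)
    (_ : ∀ x ∈ S, ∀ y ∈ S, x ≠ y → ε ≤ N (x - y)), (S.card : ℕ∞)

theorem Finset.card_sub_lt_card_filter_of_forall_exists {ι : Type*} {A : Finset ι} {k : ℕ}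
    (hk : k ≤ A.card) {P : ι → Prop} [DecidablePred P]
    (h : ∀ S ⊆ A, S.card = k → ∃ y ∈ S, P y) : A.card - k < (A.filter P).card := by
  by_contra! hle
  have hk' : k ≤ (A.filter fun y => ¬P y).card := by
    have := A.card_filter_add_card_filter_not P
    omega
  obtain ⟨S, hS, hSk⟩ := Finset.exists_subset_card_eq hk'
  obtain ⟨y, hy, hPy⟩ := h S (hS.trans (Finset.filter_subset _ _)) hSk
  exact (Finset.mem_filter.mp (hS hy)).2 hPy

section

variable {E : Type*} [AddGroup E] {N : E → ℝ} {ε : ℝ}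

def IsNormSeparated (N : E → ℝ) (ε : ℝ) (S : Finset E) : Prop :=
  ∀ x ∈ S, ∀ y ∈ S, x ≠ y → ε ≤ N (x - y)

theorem IsNormSeparated.mono {S T : Finset E} (hS : IsNormSeparated N ε S) (hTS : T ⊆ S) :
    IsNormSeparated N ε T :=
  fun x hx y hy hxy => hS x (hTS hx) y (hTS hy) hxy

theorem IsNormSeparated.image_sub_right [DecidableEq E] {S : Finset E}
    (hS : IsNormSeparated N ε S) (z : E) :
    IsNormSeparated N ε (S.image (· - z)) := by
  simp only [IsNormSeparated, Finset.mem_image]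
  rintro _ ⟨x, hx, rfl⟩ _ ⟨y, hy, rfl⟩ hxy
  rw [sub_sub_sub_cancel_right]
  exact hS x hx y hy (by rintro rfl; exact hxy rfl)

end

section

variable {n : ℕ} {N : (Fin n → ℝ) → ℝ}

theorem card_le_metricEntropy {ε : ℝ} {X : Set (Fin n → ℝ)} {S : Finset (Fin n → ℝ)}
    (hSX : ↑S ⊆ X) (hS : IsNormSeparated N ε S) : (S.card : ℕ∞) ≤ metricEntropy n N ε X :=
  le_iSup_of_le S <| le_iSup_of_le hSX <| le_iSup_of_le hS le_rfl

theorem ABConnected.exists_neighbor (hN_neg : ∀ x, N (-x) = N x) {α β : ℝ}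
    {S : Finset (Fin n → ℝ)} (hS : ABConnected n N α β S) {x : Fin n → ℝ} (hx : x ∈ S) :
    ∃ y ∈ S, y ≠ x ∧ α ≤ N (y - x) ∧ N (y - x) ≤ β := by
  obtain ⟨⟨⟨p, hp, q, hq, hpq, -⟩, hα⟩, ⟨-, hconn⟩, -⟩ := hS
  have : Nontrivial {v // v ∈ S} := ⟨⟨p, hp⟩, ⟨q, hq⟩, fun h => hpq (congrArg Subtype.val h)⟩
  obtain ⟨⟨y, hy⟩, hadj⟩ := hconn.preconnected.exists_adj_of_nontrivial ⟨x, hx⟩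
  obtain ⟨hne, hβ⟩ := (SimpleGraph.fromRel_adj _ _ _).mp hadj
  have hyx : y ≠ x := fun h => hne (Subtype.ext h.symm)
  refine ⟨y, hy, hyx, hα ⟨y, hy, x, hx, hyx, rfl⟩, ?_⟩
  rcases hβ with hβ | hβ
  · rwa [← neg_sub, hN_neg]
  · exact hβ

end

theorem not_separated_of_entropy_general
    (n : ℕ) (N : (Fin n → ℝ) → ℝ)
    (hN_smul : ∀ (a : ℝ) (x : Fin n → ℝ), N (a • x) = |a| * N x)
    (b m : ℕ) (hb : 2 ≤ b) (ε : ℝ)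
    (M : Finset (Fin n → ℝ)) (hM : M.card = m) (hbm : b ≤ m)
    (α β : ℝ)
    (hconn : ∀ S ⊆ M, S.card = b → ABConnected n N α β S)
    (hcard : ((m - b + 1 : ℕ) : ℕ∞) >
      metricEntropy n N ε {y : Fin n → ℝ | α ≤ N y ∧ N y ≤ β}) :
    ∃ z ∈ M, ∃ z' ∈ M, z ≠ z' ∧ N (z - z') < ε := by
  by_contra! hsep
  change IsNormSeparated N ε M at hsep
  have hN_neg : ∀ x, N (-x) = N x := fun x => by simpa using hN_smul (-1) x
  obtain ⟨z, hz⟩ := Finset.card_pos.mp (by omega : 0 < M.card)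
  set T := (M.erase z).filter fun y => α ≤ N (y - z) ∧ N (y - z) ≤ β
  have hnbr : ∀ S ⊆ M.erase z, S.card = b - 1 → ∃ y ∈ S, α ≤ N (y - z) ∧ N (y - z) ≤ β := by
    intro S hS hSb
    have hzS : z ∉ S := fun h => Finset.notMem_erase z M (hS h)
    have hzSM : insert z S ⊆ M := Finset.insert_subset hz (hS.trans (M.erase_subset z))
    obtain ⟨y, hy, hyz, hyA⟩ := (hconn _ hzSM (by rw [Finset.card_insert_of_notMem hzS]; omega)
      ).exists_neighbor hN_neg (Finset.mem_insert_self z S)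
    exact ⟨y, (Finset.mem_insert.mp hy).resolve_left hyz, hyA⟩
  have hT : m - b + 1 ≤ T.card := by
    have hcard_erase := Finset.card_erase_of_mem hz
    have : (M.erase z).card - (b - 1) < T.card :=
      Finset.card_sub_lt_card_filter_of_forall_exists (by omega) hnbr
    omega
  have hTM : T ⊆ M := fun y hy => Finset.mem_of_mem_erase (Finset.mem_filter.mp hy).1
  have hTX : ↑(T.image (· - z)) ⊆ {y : Fin n → ℝ | α ≤ N y ∧ N y ≤ β} := by
    rw [Finset.coe_image, Set.image_subset_iff]
    exact fun y hy => (Finset.mem_filter.mp hy).2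
  have hle := card_le_metricEntropy hTX ((hsep.mono hTM).image_sub_right z)
  rw [Finset.card_image_of_injective _ sub_left_injective] at hle
  exact (hle.trans_lt hcard).not_ge (by exact_mod_cast hT)

/-- Corollary 2: if every `b`-sized subset of `M` (`|M| = m ≥ b ≥ 2`)
is α-β-connected (`0 < α ≤ β`) and `m − b + 1` exceeds the ε-metric entropy of the
annulus `B(0, α, β)`, then `M` is not ε-separated. -/
theorem not_separated_of_entropy
    (n : ℕ) (N : (Fin n → ℝ) → ℝ)
    (hN_eq : ∀ x, N x = 0 ↔ x = 0)
    (hN_add : ∀ x y, N (x + y) ≤ N x + N y)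
    (hN_smul : ∀ (a : ℝ) (x : Fin n → ℝ), N (a • x) = |a| * N x)
    (b m : ℕ) (hb : 2 ≤ b) (ε : ℝ) (hε : 0 < ε)
    (M : Finset (Fin n → ℝ)) (hM : M.card = m) (hbm : b ≤ m)
    (α β : ℝ) (hα : 0 < α) (hαβ : α ≤ β)
    (hconn : ∀ S ⊆ M, S.card = b → ABConnected n N α β S)
    (hcard : ((m - b + 1 : ℕ) : ℕ∞) >
      metricEntropy n N ε {y : Fin n → ℝ | α ≤ N y ∧ N y ≤ β}) :
    ∃ z ∈ M, ∃ z' ∈ M, z ≠ z' ∧ N (z - z') < ε :=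
  not_separated_of_entropy_general n N hN_smul b m hb ε M hM hbm α β hconn hcard
end

section
/- (Lemma 2, metric-entropy bound for the ℓ1 annulus.) Equip ℝⁿ with the ℓ1 norm ‖x‖₁ = ∑ᵢ |xᵢ|. Let ε > 0 and 0 < α ≤ β with ε ≤ 2α. Then every ε-separated finite subset M of the annulus B(0, α, β) = {x ∈ ℝⁿ : α ≤ ‖x‖₁ ≤ β} satisfies |M| ≤ (2β/ε + 1)ⁿ − (2α/ε − 1)ⁿ; in particular N_ε(B(0, α, β)) ≤ (2β/ε + 1)ⁿ − (2α/ε − 1)ⁿ. -/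
open MeasureTheory Set Pointwise ENNReal

/-- The ℓ1 norm on `ℝⁿ`. -/
def l1norm (n : ℕ) (x : Fin n → ℝ) : ℝ := ∑ i, |x i|

namespace L1EntropyAux

variable {n : ℕ}

lemma l1_nonneg (x : Fin n → ℝ) : 0 ≤ l1norm n x :=
  Finset.sum_nonneg fun _ _ => abs_nonneg _

lemma l1_triangle (x y : Fin n → ℝ) :
    l1norm n (x + y) ≤ l1norm n x + l1norm n y := by
  unfold l1norm
  rw [← Finset.sum_add_distrib]
  exact Finset.sum_le_sum fun i _ => abs_add_le _ _

lemma l1_neg (x : Fin n → ℝ) : l1norm n (-x) = l1norm n x := by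
  simp [l1norm]

lemma l1_sub_comm (x y : Fin n → ℝ) : l1norm n (x - y) = l1norm n (y - x) := by
  rw [← l1_neg (x - y), neg_sub]

lemma l1_smul (r : ℝ) (x : Fin n → ℝ) : l1norm n (r • x) = |r| * l1norm n x := by
  simp [l1norm, abs_mul, Finset.mul_sum]

lemma l1_cont : Continuous (l1norm n) :=
  continuous_finset_sum _ fun i _ => (continuous_apply i).abs

/-- open ℓ1 ball of radius `r` centred at 0 -/
def B (n : ℕ) (r : ℝ) : Set (Fin n → ℝ) := {x | l1norm n x < r}

/-- closed ℓ1 ball of radius `r` centred at 0 -/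
def C (n : ℕ) (r : ℝ) : Set (Fin n → ℝ) := {x | l1norm n x ≤ r}

lemma B_open (r : ℝ) : IsOpen (B n r) := isOpen_lt l1_cont continuous_const

lemma B_meas (r : ℝ) : MeasurableSet (B n r) := (B_open r).measurableSet

lemma C_meas (r : ℝ) : MeasurableSet (C n r) :=
  measurableSet_le l1_cont.measurable measurable_const

lemma B_subset_C (r : ℝ) : B n r ⊆ C n r := fun x hx => le_of_lt (show l1norm n x < r from hx)

lemma C_subset_box {r : ℝ} (hr : 0 ≤ r) :
    C n r ⊆ Set.pi Set.univ (fun _ : Fin n => Set.Icc (-r) r) := by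
  intro x hx i _
  have h1 : |x i| ≤ l1norm n x :=
    Finset.single_le_sum (fun j _ => abs_nonneg (x j)) (Finset.mem_univ i)
  have := le_trans h1 hx
  exact abs_le.mp this

lemma vol_C_ne_top {r : ℝ} (hr : 0 ≤ r) : volume (C n r) ≠ ⊤ := by
  have h : volume (C n r) ≤ volume (Set.pi Set.univ (fun _ : Fin n => Set.Icc (-r) r)) :=
    measure_mono (C_subset_box (n := n) hr)
  refine ne_top_of_le_ne_top ?_ h
  rw [volume_pi_pi]
  simp [Real.volume_Icc]

lemma vol_B_ne_top {r : ℝ} (hr : 0 ≤ r) : volume (B n r) ≠ ⊤ :=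
  ne_top_of_le_ne_top (vol_C_ne_top hr) (measure_mono (B_subset_C r))

lemma vol_B_pos : 0 < volume (B n 1) :=
  (B_open 1).measure_pos volume ⟨0, by simp [B, l1norm]⟩

lemma smul_B {r : ℝ} (hr : 0 < r) : r • B n 1 = B n r := by
  ext x
  rw [Set.mem_smul_set_iff_inv_smul_mem₀ hr.ne']
  simp only [B, mem_setOf_eq, l1_smul, abs_inv, abs_of_pos hr]
  rw [inv_mul_lt_iff₀ hr, mul_one]

lemma vol_B_eq {r : ℝ} (hr : 0 < r) :
    volume (B n r) = ENNReal.ofReal (r ^ n) * volume (B n 1) := by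
  rw [← smul_B hr, Measure.addHaar_smul_of_nonneg volume hr.le,
    Module.finrank_fin_fun]

lemma vol_C_ge {r : ℝ} (hn : n ≠ 0) (hr : 0 ≤ r) :
    ENNReal.ofReal (r ^ n) * volume (B n 1) ≤ volume (C n r) := by
  rcases hr.lt_or_eq with hr' | hr'
  · rw [← vol_B_eq hr']
    exact measure_mono (B_subset_C r)
  · rw [← hr', zero_pow hn]
    simp

end L1EntropyAux

open L1EntropyAux in
/-- Lemma 2, metric-entropy bound for the ℓ1 annulus: for `ε > 0`,
`0 < α ≤ β` with `ε ≤ 2α`, every ε-separated finite subset `M` of the ℓ1-annulus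
`B(0, α, β) = {x : α ≤ ‖x‖₁ ≤ β}` satisfies
`|M| ≤ (2β/ε + 1)ⁿ − (2α/ε − 1)ⁿ`. -/
theorem l1_annulus_entropy_bound
    (n : ℕ) (ε α β : ℝ) (hε : 0 < ε) (hα : 0 < α) (hαβ : α ≤ β) (hεα : ε ≤ 2 * α)
    (M : Finset (Fin n → ℝ))
    (hMsub : ∀ x ∈ M, α ≤ l1norm n x ∧ l1norm n x ≤ β)
    (hMsep : ∀ x ∈ M, ∀ y ∈ M, x ≠ y → ε ≤ l1norm n (x - y)) :
    (M.card : ℝ) ≤ (2 * β / ε + 1) ^ n - (2 * α / ε - 1) ^ n := by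
  rcases Nat.eq_zero_or_pos n with hn | hn
  · subst hn
    have hM : M = ∅ := by
      rcases Finset.eq_empty_or_nonempty M with h | ⟨x, hx⟩
      · exact h
      · exfalso
        have := (hMsub x hx).1
        have hx0 : l1norm 0 x = 0 := by simp [l1norm]
        linarith
    simp [hM]
  -- main case
  obtain ⟨e, he⟩ : ∃ e : ℝ, e = ε / 2 := ⟨_, rfl⟩
  have he0 : 0 < e := by rw [he]; positivity
  obtain ⟨R, hR⟩ : ∃ R : ℝ, R = β + e := ⟨_, rfl⟩
  obtain ⟨r, hr⟩ : ∃ r : ℝ, r = α - e := ⟨_, rfl⟩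
  have hr0 : 0 ≤ r := by simp [hr, he]; linarith
  have hrR : r < R := by simp [hr, hR]; nlinarith
  have hR0 : 0 < R := lt_of_le_of_lt hr0 hrR
  set c := volume (B n 1) with hc
  -- translated balls
  set T : (Fin n → ℝ) → Set (Fin n → ℝ) := fun x => {y | l1norm n (y - x) < e} with hT
  have hTvadd : ∀ x, T x = x +ᵥ B n e := by
    intro x
    ext y
    rw [Set.mem_vadd_set_iff_neg_vadd_mem]
    simp [T, B, vadd_eq_add, ← sub_eq_neg_add]
  have hTvol : ∀ x, volume (T x) = ENNReal.ofReal (e ^ n) * c := by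
    intro x
    rw [hTvadd, measure_vadd, vol_B_eq he0]
  have hTmeas : ∀ x, MeasurableSet (T x) := by
    intro x
    rw [hTvadd]
    exact (B_meas e).const_vadd x
  -- disjointness
  have hdisj : (M : Set (Fin n → ℝ)).PairwiseDisjoint T := by
    intro x hx y hy hxy
    rw [Function.onFun, Set.disjoint_left]
    intro z hzx hzy
    have h1 : l1norm n (z - x) < e := hzx
    have h2 : l1norm n (z - y) < e := hzy
    have h3 := hMsep x hx y hy hxy
    have h4 : l1norm n (x - y) ≤ l1norm n (x - z) + l1norm n (z - y) := by
      have := l1_triangle (x - z) (z - y)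
      simpa [sub_add_sub_cancel] using this
    rw [l1_sub_comm x z] at h4
    linarith
  -- union is inside the enlarged annulus
  have hsub : (⋃ x ∈ M, T x) ⊆ B n R \ C n r := by
    intro z hz
    simp only [Set.mem_iUnion] at hz
    obtain ⟨x, hx, hzx⟩ := hz
    have h1 : l1norm n (z - x) < e := hzx
    obtain ⟨ha, hb⟩ := hMsub x hx
    constructor
    · have : l1norm n z ≤ l1norm n x + l1norm n (z - x) := by
        have := l1_triangle x (z - x)
        simpa using this
      simp only [B, mem_setOf_eq]
      calc l1norm n z ≤ l1norm n x + l1norm n (z - x) := this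
        _ < R := by rw [hR]; linarith
    · intro hzC
      have h2 : l1norm n x ≤ l1norm n z + l1norm n (x - z) := by
        have := l1_triangle z (x - z)
        simpa using this
      rw [l1_sub_comm x z] at h2
      have hzr : l1norm n z ≤ r := hzC
      have : α ≤ l1norm n x := ha
      simp only [hr] at hzr
      linarith
  -- measure computation
  have hunion : volume (⋃ x ∈ M, T x) = M.card * (ENNReal.ofReal (e ^ n) * c) := by
    rw [measure_biUnion_finset hdisj (fun x _ => hTmeas x)]
    rw [Finset.sum_congr rfl (fun x _ => hTvol x), Finset.sum_const, nsmul_eq_mul]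
  have hdiffvol : volume (B n R \ C n r) = volume (B n R) - volume (C n r) :=
    measure_diff (fun z hz => lt_of_le_of_lt hz hrR) (C_meas r).nullMeasurableSet
      (vol_C_ne_top hr0)
  have key : (M.card : ℝ≥0∞) * (ENNReal.ofReal (e ^ n) * c) ≤
      (ENNReal.ofReal (R ^ n) - ENNReal.ofReal (r ^ n)) * c := by
    rw [← hunion]
    refine le_trans (measure_mono hsub) ?_
    rw [hdiffvol, vol_B_eq hR0]
    refine le_trans (tsub_le_tsub_left (vol_C_ge hn.ne' hr0) _) ?_
    rw [ENNReal.sub_mul (fun _ _ => ne_of_lt (lt_of_le_of_lt (measure_mono (B_subset_C 1))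
      (lt_top_iff_ne_top.mpr (vol_C_ne_top zero_le_one))))]
  -- cancel c
  have hc0 : c ≠ 0 := vol_B_pos.ne'
  have hctop : c ≠ ⊤ := vol_B_ne_top zero_le_one
  have key2 : (M.card : ℝ≥0∞) * ENNReal.ofReal (e ^ n) ≤
      ENNReal.ofReal (R ^ n) - ENNReal.ofReal (r ^ n) := by
    rw [← mul_assoc] at key
    exact (ENNReal.mul_le_mul_iff_left hc0 hctop).mp key
  -- to reals
  have hrn : (0:ℝ) ≤ r ^ n := pow_nonneg hr0 n
  have hRrn : r ^ n ≤ R ^ n := pow_le_pow_left₀ hr0 hrR.le n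
  have key3 : (M.card : ℝ) * e ^ n ≤ R ^ n - r ^ n := by
    have h1 : (M.card : ℝ≥0∞) * ENNReal.ofReal (e ^ n)
        = ENNReal.ofReal ((M.card : ℝ) * e ^ n) := by
      rw [ENNReal.ofReal_mul (by positivity)]
      simp
    rw [h1, ← ENNReal.ofReal_sub _ hrn] at key2
    rw [← ENNReal.ofReal_le_ofReal_iff (by linarith)]
    exact key2
  -- final algebra
  have hen : (0:ℝ) < e ^ n := pow_pos he0 n
  have hβ : (2 * β / ε + 1) = R / e := by
    rw [hR, he]; field_simp
  have hαe : (2 * α / ε - 1) = r / e := by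
    rw [hr, he]; field_simp
  rw [hβ, hαe, div_pow, div_pow, div_sub_div_same, le_div_iff₀ hen]
  exact key3
end

section
/- (Remark 1, necessary condition on batch size — metric-entropy form.) Let ‖·‖ be a norm on ℝⁿ, let 0 < α ≤ β, let 2 ≤ b, and let M ⊂ ℝⁿ be a finite set with |M| = 2b − 1 such that every subset S ⊆ M with |S| = b is α-β-connected. Then b ≤ N_α(B(0, α, β)), the α-metric entropy of the annulus B(0, α, β) = {x ∈ ℝⁿ : α ≤ ‖x‖ ≤ β}. -/
/-- Remark 1, metric-entropy form: if every `b`-sized subset of `M`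
(`|M| = 2b − 1`, `b ≥ 2`) is α-β-connected (`0 < α ≤ β`), then
`b ≤ N_α(B(0, α, β))`, the α-metric entropy of the annulus. -/
theorem batch_size_entropy_bound
    (n : ℕ) (N : (Fin n → ℝ) → ℝ)
    (hN_eq : ∀ x, N x = 0 ↔ x = 0)
    (hN_add : ∀ x y, N (x + y) ≤ N x + N y)
    (hN_smul : ∀ (a : ℝ) (x : Fin n → ℝ), N (a • x) = |a| * N x)
    (b : ℕ) (hb : 2 ≤ b)
    (M : Finset (Fin n → ℝ)) (hM : M.card = 2 * b - 1)
    (α β : ℝ) (hα : 0 < α) (hαβ : α ≤ β)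
    (hconn : ∀ S ⊆ M, S.card = b → ABConnected n N α β S) :
    (b : ℕ∞) ≤ metricEntropy n N α {y : Fin n → ℝ | α ≤ N y ∧ N y ≤ β} := by
  classical
  have hsymm : ∀ x y : Fin n → ℝ, N (x - y) = N (y - x) := by
    intro x y
    have h : y - x = (-1 : ℝ) • (x - y) := by module
    rw [h, hN_smul]; simp
  -- all pairwise distances in M are at least α
  have hsep : ∀ x ∈ M, ∀ y ∈ M, x ≠ y → α ≤ N (x - y) := by
    intro x hx y hy hxy
    have hsub : ({x, y} : Finset (Fin n → ℝ)) ⊆ M := by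
      intro z hz; simp only [Finset.mem_insert, Finset.mem_singleton] at hz
      rcases hz with rfl | rfl <;> assumption
    obtain ⟨S, hS1, hS2, hS3⟩ := Finset.exists_subsuperset_card_eq (n := b) hsub
      (le_trans (Finset.card_insert_le _ _) (by rw [Finset.card_singleton]; omega)) (by omega)
    have h1 := (hconn S hS2 hS3).1.2
    exact h1 ⟨x, hS1 (by simp), y, hS1 (by simp), hxy, rfl⟩
  -- every point of M has at least b points of M within distance β
  have hdeg : ∀ v ∈ M, b ≤ (M.filter fun w => w ≠ v ∧ N (v - w) ≤ β).card := by
    intro v hv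
    by_contra hlt
    push_neg at hlt
    set A := M.filter fun w => w ≠ v ∧ N (v - w) ≤ β with hA
    have hvA : (insert v A) ⊆ M := by
      intro z hz; rcases Finset.mem_insert.1 hz with rfl | hz
      · exact hv
      · exact (Finset.mem_filter.1 hz).1
    have hCcard : b - 1 ≤ (M \ insert v A).card := by
      rw [Finset.card_sdiff_of_subset hvA, hM]
      have := Finset.card_insert_le v A
      omega
    obtain ⟨U, hU1, hU2⟩ := Finset.exists_subset_card_eq hCcard
    have hvU : v ∉ U := by
      intro h
      have := hU1 h
      rw [Finset.mem_sdiff] at this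
      exact this.2 (Finset.mem_insert_self _ _)
    set S := insert v U with hS
    have hScard : S.card = b := by
      rw [hS, Finset.card_insert_of_notMem hvU, hU2]; omega
    have hSM : S ⊆ M := by
      intro z hz; rcases Finset.mem_insert.1 hz with rfl | hz
      · exact hv
      · exact (Finset.mem_sdiff.1 (hU1 hz)).1
    have hc := (hconn S hSM hScard).2.1.2
    -- v is isolated in this graph
    have hiso : ∀ w ∈ U, β < N (v - w) := by
      intro w hw
      have hw' := Finset.mem_sdiff.1 (hU1 hw)
      have hwv : w ≠ v := by
        intro h; exact hw'.2 (h ▸ Finset.mem_insert_self _ _)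
      have hwA : w ∉ A := fun h => hw'.2 (Finset.mem_insert_of_mem h)
      rw [hA, Finset.mem_filter] at hwA
      push_neg at hwA
      exact hwA hw'.1 hwv
    have hvS : v ∈ S := Finset.mem_insert_self _ _
    obtain ⟨u, hu, hune⟩ := Finset.exists_mem_ne (s := S) (by omega) v
    have hreach := hc.preconnected ⟨v, hvS⟩ ⟨u, hu⟩
    obtain ⟨p⟩ := hreach
    cases p with
    | nil => exact hune rfl
    | @cons _ x _ h q =>
      rw [SimpleGraph.fromRel_adj] at h
      obtain ⟨hne, hor⟩ := h
      have hxU : x.1 ∈ U := by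
        rcases Finset.mem_insert.1 x.2 with h' | h'
        · exact absurd (Subtype.ext h'.symm) hne
        · exact h'
      have h1 := hiso x.1 hxU
      have h2 : N (x.1 - v) = N (v - x.1) := hsymm _ _
      rcases hor with h' | h'
      · exact absurd h' (not_le.2 h1)
      · rw [h2] at h'; exact absurd h' (not_le.2 h1)
  -- now construct the separated set in the annulus
  have hMne : M.Nonempty := Finset.card_pos.1 (by omega)
  obtain ⟨v, hv⟩ := hMne
  set A := M.filter fun w => w ≠ v ∧ N (v - w) ≤ β with hA
  have hAcard : b ≤ A.card := hdeg v hv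
  set T := A.image (fun w => v - w) with hT
  have hTcard : T.card = A.card := by
    rw [hT]
    apply Finset.card_image_of_injective
    intro a c h
    have : v - a = v - c := h
    have := sub_right_injective this
    exact this
  have hAmem : ∀ w ∈ A, w ∈ M ∧ w ≠ v ∧ N (v - w) ≤ β := by
    intro w hw; rw [hA, Finset.mem_filter] at hw; exact ⟨hw.1, hw.2⟩
  have hTsub : ↑T ⊆ {y : Fin n → ℝ | α ≤ N y ∧ N y ≤ β} := by
    intro y hy
    simp only [hT, Finset.coe_image, Set.mem_image, Finset.mem_coe] at hy
    obtain ⟨w, hw, rfl⟩ := hy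
    obtain ⟨hwM, hwv, hwβ⟩ := hAmem w hw
    exact ⟨hsep v hv w hwM (fun h => hwv h.symm), hwβ⟩
  have hTsep : ∀ x ∈ T, ∀ y ∈ T, x ≠ y → α ≤ N (x - y) := by
    intro x hx y hy hxy
    simp only [hT, Finset.mem_image] at hx hy
    obtain ⟨w, hw, rfl⟩ := hx
    obtain ⟨w', hw', rfl⟩ := hy
    have hww' : w' ≠ w := by
      intro h; exact hxy (by rw [h])
    have : v - w - (v - w') = w' - w := by module
    rw [this]
    exact hsep w' (hAmem w' hw').1 w (hAmem w hw).1 hww'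
  have hbT : (b : ℕ∞) ≤ (T.card : ℕ∞) := by
    exact_mod_cast hTcard ▸ hAcard
  refine hbT.trans ?_
  rw [metricEntropy]
  exact le_iSup_of_le T (le_iSup_of_le hTsub (le_iSup_of_le hTsep le_rfl))
end

section
/- (Lemma A.1, local constancy of the merging-pair indicator.) Let ‖·‖ be a norm on ℝⁿ, and let z₁, …, z_b ∈ ℝⁿ (b ≥ 2) have unique pairwise distances. For a 2-element subset {i, j} of {1, …, b}, define the indicator 𝟙_{i,j}(z₁, …, z_b) = 1 iff i and j lie in different connected components of the graph on vertex set {1, …, b} whose edges are the pairs {k, l} with ‖z_k − z_l‖ < ‖z_i − z_j‖, and 𝟙_{i,j} = 0 otherwise. Then there exists ξ > 0 such that for every 1 ≤ u ≤ b, 1 ≤ v ≤ n, and every h ∈ ℝ with |h| < ξ, replacing z_u by z_u + h·e_v (where e_v is the v-th standard basis vector) leaves all indicators unchanged: 𝟙_{i,j}(z'₁, …, z'_b) = 𝟙_{i,j}(z₁, …, z_b) for every pair {i, j}. -/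
open Classical

/-- The merging-pair indicator `𝟙_{i,j}(z₁, …, z_b)`: it equals `1` iff `i` and `j`
lie in different connected components of the graph on `{1, …, b}` whose edges are
the pairs `{k, l}` with `N(z_k − z_l) < N(z_i − z_j)`, and `0` otherwise. -/
noncomputable def mergeIndicator (n b : ℕ) (N : (Fin n → ℝ) → ℝ)
    (z : Fin b → (Fin n → ℝ)) (i j : Fin b) : ℕ :=
  if (SimpleGraph.fromRel
      (fun k l : Fin b => N (z k - z l) < N (z i - z j))).Reachable i j
  then 0 else 1

/-!
Distinct pairwise distances are separated by some gap `δ > 0`, while moving one point by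
`h • e_v` changes every pairwise distance by at most `2 |h| N(e_v)`. For `|h|` small this is
less than `δ / 4`, so every comparison `N (z k - z l) < N (z i - z j)` keeps its truth value
(equal distances come from the same pair and stay equal). Hence the threshold graphs, and
with them the indicators, do not change.
-/

open Filter Topology

theorem exists_pos_le_abs_sub_of_ne {ι : Type*} [Finite ι] (f : ι → ℝ) :
    ∃ δ > 0, ∀ x y, f x ≠ f y → δ ≤ |f x - f y| := by
  have hgap : ∀ x y, ∀ᶠ δ in 𝓝[>] (0 : ℝ), f x ≠ f y → δ ≤ |f x - f y| := by
    intro x y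
    by_cases hxy : f x = f y
    · simp [hxy]
    · filter_upwards [nhdsWithin_le_nhds
        (eventually_le_nhds (abs_pos.2 (sub_ne_zero.2 hxy)))] with δ hδ _ using hδ
  exact (eventually_mem_nhdsWithin.and
    (eventually_all.2 fun x => eventually_all.2 (hgap x))).exists

theorem exists_pos_forall_seminorm_smul_lt {𝕜 E ι : Type*} [NormedField 𝕜] [AddCommGroup E]
    [Module 𝕜 E] [Finite ι] (p : Seminorm 𝕜 E) (w : ι → E) {ε : ℝ} (hε : 0 < ε) :
    ∃ ξ > 0, ∀ v (c : 𝕜), ‖c‖ < ξ → p (c • w v) < ε := by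
  have hsmall : ∀ v, ∀ᶠ ξ in 𝓝[>] (0 : ℝ), ξ * p (w v) < ε := fun v =>
    nhdsWithin_le_nhds <| (continuous_id.mul continuous_const).tendsto' 0 0 (zero_mul _)
      |>.eventually (gt_mem_nhds hε)
  obtain ⟨ξ, hξ, hξv⟩ := (eventually_mem_nhdsWithin.and (eventually_all.2 hsmall)).exists
  refine ⟨ξ, hξ, fun v c hc => ?_⟩
  calc p (c • w v) = ‖c‖ * p (w v) := map_smul_eq_mul p c (w v)
    _ ≤ ξ * p (w v) := by gcongr
    _ < ε := hξv v

theorem abs_map_update_sub_sub_le {F α E : Type*} [AddCommGroup E] [FunLike F E ℝ]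
    [AddGroupSeminormClass F E ℝ] [DecidableEq α] (p : F) (z : α → E) (u : α) (w : E)
    (k l : α) :
    |p (Function.update z u (z u + w) k - Function.update z u (z u + w) l) - p (z k - z l)|
      ≤ 2 * p w := by
  set d : α → E := Pi.single u w
  have hupdate : Function.update z u (z u + w) = z + d := by
    funext x
    by_cases hx : x = u <;> simp [d, hx]
  have hd : ∀ x, p (d x) ≤ p w := fun x => by
    by_cases hx : x = u <;> simp [d, hx, apply_nonneg]
  calc _ ≤ p (Function.update z u (z u + w) k - Function.update z u (z u + w) l - (z k - z l)) :=
        abs_sub_map_le_sub p _ _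
    _ = p (d k - d l) := by
        rw [hupdate, Pi.add_apply, Pi.add_apply]
        abel_nf
    _ ≤ p (d k) + p (d l) := map_sub_le_add p _ _
    _ ≤ 2 * p w := by linarith [hd k, hd l]

theorem lt_iff_lt_of_abs_sub_lt {a b a' b' δ : ℝ} (hsep : a ≠ b → δ ≤ |a - b|)
    (ha : |a' - a| < δ / 2) (hb : |b' - b| < δ / 2) (heq : a = b → a' = b') :
    a' < b' ↔ a < b := by
  by_cases hab : a = b
  · simp [hab, heq hab]
  · have hδ := hsep hab
    rw [abs_lt] at ha hb
    rcases abs_cases (a - b) with ⟨habs, _⟩ | ⟨habs, _⟩ <;>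
      rw [habs] at hδ <;> constructor <;> intro <;> linarith

theorem map_sub_eq_of_pair_eq {F α E : Type*} [AddGroup E] [FunLike F E ℝ]
    [AddGroupSeminormClass F E ℝ] [DecidableEq α] (p : F) (z : α → E) {i j k l : α}
    (h : ({i, j} : Finset α) = {k, l}) : p (z i - z j) = p (z k - z l) := by
  rw [← Finset.coe_inj, Finset.coe_pair, Finset.coe_pair, Set.pair_eq_pair_iff] at h
  rcases h with ⟨rfl, rfl⟩ | ⟨rfl, rfl⟩
  · rfl
  · exact map_sub_rev p _ _

theorem mergeIndicator_eq_of_forall_lt_iff {n b : ℕ} {N : (Fin n → ℝ) → ℝ}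
    {z z' : Fin b → Fin n → ℝ} {i j : Fin b}
    (h : ∀ k l, k ≠ l → (N (z' k - z' l) < N (z' i - z' j) ↔ N (z k - z l) < N (z i - z j))) :
    mergeIndicator n b N z' i j = mergeIndicator n b N z i j := by
  have hgraph : SimpleGraph.fromRel (fun k l => N (z' k - z' l) < N (z' i - z' j)) =
      SimpleGraph.fromRel (fun k l => N (z k - z l) < N (z i - z j)) := by
    ext k l
    simp only [SimpleGraph.fromRel_adj]
    exact and_congr_right fun hkl => or_congr (h k l hkl) (h l k hkl.symm)
  simp only [mergeIndicator, hgraph]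

theorem indicator_locally_constant_general
    (n b : ℕ) (N : (Fin n → ℝ) → ℝ)
    (hN_add : ∀ x y, N (x + y) ≤ N x + N y)
    (hN_smul : ∀ (a : ℝ) (x : Fin n → ℝ), N (a • x) = |a| * N x)
    (z : Fin b → (Fin n → ℝ))
    (huniq : ∀ i j k l : Fin b, i ≠ j → k ≠ l →
      N (z i - z j) = N (z k - z l) → ({i, j} : Finset (Fin b)) = {k, l}) :
    ∃ ξ > (0 : ℝ), ∀ (u : Fin b) (v : Fin n) (h : ℝ), |h| < ξ →
      ∀ i j : Fin b, i ≠ j →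
        mergeIndicator n b N (Function.update z u (z u + h • (Pi.single v 1 : Fin n → ℝ))) i j =
          mergeIndicator n b N z i j := by
  obtain ⟨p, rfl⟩ : ∃ p : Seminorm ℝ (Fin n → ℝ), ⇑p = N :=
    ⟨.of N hN_add fun a x => by rw [hN_smul, Real.norm_eq_abs], rfl⟩
  obtain ⟨δ, hδ, hgap⟩ := exists_pos_le_abs_sub_of_ne fun q : Fin b × Fin b => p (z q.1 - z q.2)
  obtain ⟨ξ, hξ, hsmall⟩ := exists_pos_forall_seminorm_smul_lt p
    (fun v : Fin n => (Pi.single v 1 : Fin n → ℝ)) (by positivity : 0 < δ / 4)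
  refine ⟨ξ, hξ, fun u v h hh i j hij => mergeIndicator_eq_of_forall_lt_iff fun k l hkl => ?_⟩
  have hclose : ∀ k l, |p (Function.update z u (z u + h • Pi.single v 1) k -
      Function.update z u (z u + h • Pi.single v 1) l) - p (z k - z l)| < δ / 2 := fun k l =>
    (abs_map_update_sub_sub_le p z u _ k l).trans_lt (by linarith [hsmall v h hh])
  exact lt_iff_lt_of_abs_sub_lt (hgap (k, l) (i, j)) (hclose k l) (hclose i j)
    fun heq => map_sub_eq_of_pair_eq p _ (huniq k l i j hkl hij heq)

/-- Lemma A.1, local constancy of the merging-pair indicator: if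
`z₁, …, z_b` (`b ≥ 2`) have unique pairwise distances w.r.t. the norm `N`, then
there exists `ξ > 0` such that replacing any `z_u` by `z_u + h·e_v` with `|h| < ξ`
leaves all indicators `𝟙_{i,j}` unchanged. -/
theorem indicator_locally_constant
    (n b : ℕ) (hb : 2 ≤ b) (N : (Fin n → ℝ) → ℝ)
    (hN_eq : ∀ x, N x = 0 ↔ x = 0)
    (hN_add : ∀ x y, N (x + y) ≤ N x + N y)
    (hN_smul : ∀ (a : ℝ) (x : Fin n → ℝ), N (a • x) = |a| * N x)
    (z : Fin b → (Fin n → ℝ))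
    (huniq : ∀ i j k l : Fin b, i ≠ j → k ≠ l →
      N (z i - z j) = N (z k - z l) → ({i, j} : Finset (Fin b)) = {k, l}) :
    ∃ ξ > (0 : ℝ), ∀ (u : Fin b) (v : Fin n) (h : ℝ), |h| < ξ →
      ∀ i j : Fin b, i ≠ j →
        mergeIndicator n b N (Function.update z u (z u + h • (Pi.single v 1 : Fin n → ℝ))) i j =
          mergeIndicator n b N z i j :=
  indicator_locally_constant_general n b N hN_add hN_smul z huniq
end

section
/- (Appendix Lemma C.1, termination of the parallel reduction algorithm.) Let B ∈ (ℤ₂)^{m×n} be a matrix over the two-element field. Define the step map Φ on (ℤ₂)^{m×n} by: Φ(B)[j] = B[j] + B[i] if (i, j) ∈ M(B), and Φ(B)[j] = B[j] otherwise (this is well defined since for each j there is at most one i with (i, j) ∈ M(B), and no index is both a source and a target). Then there exists k ∈ ℕ such that Φ^k(B) is reduced, i.e., M(Φ^k(B)) = ∅. -/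
open Classical

variable {m n : ℕ}

/-- `lowOf B i` is the largest row index `j` with `B j i = 1` (as an integer),
or `-1` if the `i`-th column of `B` is zero. -/
noncomputable def lowOf (B : Matrix (Fin m) (Fin n) (ZMod 2)) (i : Fin n) : ℤ :=
  if h : (Finset.univ.filter fun j : Fin m => B j i ≠ 0).Nonempty
  then (((Finset.univ.filter fun j : Fin m => B j i ≠ 0).max' h : Fin m) : ℤ)
  else -1

/-- `Ifun B j = {i : low(B, i) = j}` if this set has at least two elements,
and `∅` otherwise. -/
noncomputable def Ifun (B : Matrix (Fin m) (Fin n) (ZMod 2)) (j : Fin m) :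
    Finset (Fin n) :=
  if 2 ≤ (Finset.univ.filter fun i : Fin n => lowOf B i = (j : ℤ)).card
  then Finset.univ.filter fun i : Fin n => lowOf B i = (j : ℤ)
  else ∅

/-- `Mset B = ⋃_j M(B, j)` where
`M(B, j) = {min I(B, j)} × (I(B, j) \ {min I(B, j)})` if `I(B, j) ≠ ∅`,
and `M(B, j) = ∅` otherwise. -/
noncomputable def Mset (B : Matrix (Fin m) (Fin n) (ZMod 2)) :
    Finset (Fin n × Fin n) :=
  Finset.univ.biUnion fun j : Fin m =>
    if h : (Ifun B j).Nonempty
    then ({(Ifun B j).min' h} : Finset (Fin n)) ×ˢ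
      ((Ifun B j).erase ((Ifun B j).min' h))
    else ∅

/-- The parallel reduction step map `Φ`: the `j`-th column of `Φ(B)` is
`B[j] + B[i]` if `(i, j) ∈ M(B)`, and `B[j]` otherwise. (This is well defined
since for each `j` there is at most one `i` with `(i, j) ∈ M(B)`.) -/
noncomputable def step (B : Matrix (Fin m) (Fin n) (ZMod 2)) :
    Matrix (Fin m) (Fin n) (ZMod 2) :=
  fun r j =>
    if h : ∃ i : Fin n, (i, j) ∈ Mset B
    then B r j + B r (Classical.choose h)
    else B r j

lemma le_lowOf {B : Matrix (Fin m) (Fin n) (ZMod 2)} {r : Fin m} {i : Fin n}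
    (h : B r i ≠ 0) : (r : ℤ) ≤ lowOf B i := by
  have hr : r ∈ Finset.univ.filter fun j : Fin m => B j i ≠ 0 := by
    simp [h]
  have hne : (Finset.univ.filter fun j : Fin m => B j i ≠ 0).Nonempty := ⟨r, hr⟩
  rw [lowOf, dif_pos hne]
  exact_mod_cast Finset.le_max' _ r hr

lemma lowOf_mem {B : Matrix (Fin m) (Fin n) (ZMod 2)} {l : Fin m} {i : Fin n}
    (h : lowOf B i = (l : ℤ)) : B l i ≠ 0 := by
  rw [lowOf] at h
  split at h
  · rename_i hne
    have : (Finset.univ.filter fun j : Fin m => B j i ≠ 0).max' hne = l := by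
      apply Fin.ext
      exact_mod_cast h
    have hm := Finset.max'_mem (Finset.univ.filter fun j : Fin m => B j i ≠ 0) hne
    rw [this] at hm
    simpa using hm
  · omega

lemma lowOf_lt {B : Matrix (Fin m) (Fin n) (ZMod 2)} {i : Fin n} {l : ℤ}
    (hl : 0 ≤ l) (h : ∀ r : Fin m, B r i ≠ 0 → (r : ℤ) < l) : lowOf B i < l := by
  rw [lowOf]
  split
  · rename_i hne
    have hm := Finset.max'_mem (Finset.univ.filter fun j : Fin m => B j i ≠ 0) hne
    simp only [Finset.mem_filter] at hm
    exact h _ hm.2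
  · omega

lemma lowOf_congr {B B' : Matrix (Fin m) (Fin n) (ZMod 2)} {i : Fin n}
    (h : ∀ r, B r i = B' r i) : lowOf B i = lowOf B' i := by
  unfold lowOf
  simp only [h]

lemma mem_Mset {B : Matrix (Fin m) (Fin n) (ZMod 2)} {i j : Fin n}
    (h : (i, j) ∈ Mset B) :
    ∃ l : Fin m, lowOf B i = (l : ℤ) ∧ lowOf B j = (l : ℤ) ∧ i ≠ j := by
  rw [Mset, Finset.mem_biUnion] at h
  obtain ⟨l, -, hl⟩ := h
  refine ⟨l, ?_⟩
  split at hl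
  · rename_i hne
    rw [Finset.mem_product] at hl
    obtain ⟨hi, hj⟩ := hl
    simp only [Finset.mem_singleton] at hi
    have hjI : j ∈ Ifun B l := Finset.mem_of_mem_erase hj
    have hiI : i ∈ Ifun B l := hi ▸ Finset.min'_mem _ hne
    have hij : i ≠ j := fun e => (Finset.ne_of_mem_erase hj) (by simp only [← e]; exact hi)
    have hmem : ∀ x ∈ Ifun B l, lowOf B x = (l : ℤ) := by
      intro x hx
      rw [Ifun] at hx
      split at hx
      · simpa using hx
      · simp at hx
    exact ⟨hmem i hiI, hmem j hjI, hij⟩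
  · simp at hl

lemma zmod2_add_self (x : ZMod 2) (hx : x ≠ 0) (y : ZMod 2) (hy : y ≠ 0) :
    x + y = 0 := by
  revert x y; decide

/-- The measure: sum over columns of `low + 1`. -/
noncomputable def meas (B : Matrix (Fin m) (Fin n) (ZMod 2)) : ℕ :=
  ∑ j : Fin n, (lowOf B j + 1).toNat

lemma lowOf_step_le (B : Matrix (Fin m) (Fin n) (ZMod 2)) (j : Fin n) :
    lowOf (step B) j ≤ lowOf B j := by
  by_cases h : ∃ i : Fin n, (i, j) ∈ Mset B
  · obtain ⟨l, hli, hlj, hij⟩ := mem_Mset (Classical.choose_spec h)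
    set i := Classical.choose h with hi
    have hstep : ∀ r, step B r j = B r j + B r i := by
      intro r; rw [step, dif_pos h]
    rw [hlj]
    apply le_of_lt
    apply lowOf_lt (by positivity)
    intro r hr
    rw [hstep r] at hr
    rcases lt_trichotomy ((r : ℤ)) ((l : ℤ)) with h1 | h1 | h1
    · exact h1
    · exfalso
      have : r = l := Fin.ext (by exact_mod_cast h1)
      subst this
      exact hr (zmod2_add_self _ (lowOf_mem hlj) _ (lowOf_mem hli))
    · exfalso
      have hz1 : B r j = 0 := by
        by_contra hc
        have := le_lowOf hc
        rw [hlj] at this; omega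
      have hz2 : B r i = 0 := by
        by_contra hc
        have := le_lowOf hc
        rw [hli] at this; omega
      rw [hz1, hz2] at hr; simp at hr
  · have : ∀ r, step B r j = B r j := by
      intro r; rw [step, dif_neg h]
    rw [lowOf_congr this]

lemma lowOf_step_lt {B : Matrix (Fin m) (Fin n) (ZMod 2)} {i j : Fin n}
    (hm : (i, j) ∈ Mset B) :
    lowOf (step B) j < lowOf B j ∧ 0 ≤ lowOf B j := by
  obtain ⟨l, _, hlj, _⟩ := mem_Mset hm
  have h : ∃ i : Fin n, (i, j) ∈ Mset B := ⟨i, hm⟩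
  obtain ⟨l', hli', hlj', _⟩ := mem_Mset (Classical.choose_spec h)
  set i' := Classical.choose h
  have hstep : ∀ r, step B r j = B r j + B r i' := by
    intro r; rw [step, dif_pos h]
  constructor
  · rw [hlj']
    apply lowOf_lt (by positivity)
    intro r hr
    rw [hstep r] at hr
    rcases lt_trichotomy ((r : ℤ)) ((l' : ℤ)) with h1 | h1 | h1
    · exact h1
    · exfalso
      have : r = l' := Fin.ext (by exact_mod_cast h1)
      subst this
      exact hr (zmod2_add_self _ (lowOf_mem hlj') _ (lowOf_mem hli'))
    · exfalso
      have hz1 : B r j = 0 := by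
        by_contra hc
        have := le_lowOf hc
        rw [hlj'] at this; omega
      have hz2 : B r i' = 0 := by
        by_contra hc
        have := le_lowOf hc
        rw [hli'] at this; omega
      rw [hz1, hz2] at hr; simp at hr
  · rw [hlj]; positivity

lemma meas_step_lt {B : Matrix (Fin m) (Fin n) (ZMod 2)} (h : Mset B ≠ ∅) :
    meas (step B) < meas B := by
  obtain ⟨⟨i, j⟩, hij⟩ := Finset.nonempty_iff_ne_empty.mpr h
  apply Finset.sum_lt_sum
  · intro c _
    have := lowOf_step_le B c
    omega
  · refine ⟨j, Finset.mem_univ j, ?_⟩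
    obtain ⟨h1, h2⟩ := lowOf_step_lt hij
    omega

/-- Appendix Lemma C.1, termination of the parallel reduction
algorithm: for every `B ∈ (ℤ₂)^{m×n}` there is `k ∈ ℕ` such that `Φᵏ(B)` is
reduced, i.e. `M(Φᵏ(B)) = ∅`. -/
theorem parallel_reduction_terminates (B : Matrix (Fin m) (Fin n) (ZMod 2)) :
    ∃ k : ℕ, Mset (step^[k] B) = ∅ := by
  suffices h : ∀ N (B : Matrix (Fin m) (Fin n) (ZMod 2)), meas B ≤ N →
      ∃ k : ℕ, Mset (step^[k] B) = ∅ from h (meas B) B le_rfl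
  intro N
  induction N with
  | zero =>
    intro B hB
    by_cases h : Mset B = ∅
    · exact ⟨0, h⟩
    · have := meas_step_lt h
      omega
  | succ N ih =>
    intro B hB
    by_cases h : Mset B = ∅
    · exact ⟨0, h⟩
    · have := meas_step_lt h
      obtain ⟨k, hk⟩ := ih (step B) (by omega)
      exact ⟨k + 1, by rwa [Function.iterate_succ_apply]⟩
end
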